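/- Let q ≥ 2, n > 2q + 4, 1 ≤ ℓ < q, and 0 < τ ≤ τ'. Let y_1,…,y_n ∈ ℝ^ℓ be nonzero. Set w_{ij} = exp(cos(y_i, y_j)/τ') (the X-CLR weighting) and, for nonzero z_1,…,z_n ∈ ℝ^q, let S_Z have entries s_{ij} = cos(z_i, z_j)/τ. Then the embedding Z* defined by z*_i = (y_i/‖y_i‖, √(τ'/τ - 1), 0, …, 0) ∈ ℝ^q attains the entropic lower bound, L_W(S_{Z*}) = H(W). Moreover, for any two embeddings Z, Z' attaining the bound there is a linear isometry O of ℝ^q with z'_i/‖z'_i‖ = O(z_i/‖z_i‖) for all i. -/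

import Mathlib

open scoped BigOperators
open scoped RealInnerProductSpace
open FiniteDimensional Module

/-- The weighted InfoNCE loss. -/
noncomputable def infoNCE {n : ℕ} (W S : Matrix (Fin n) (Fin n) ℝ) : ℝ :=
  -(1 / (n : ℝ)) * ∑ i : Fin n, ∑ j ∈ Finset.univ.erase i,
    (W i j / ∑ k ∈ Finset.univ.erase i, W i k) *
      Real.log (Real.exp (S i j) / ∑ k ∈ Finset.univ.erase i, Real.exp (S i k))

/-- The entropic lower bound (with the convention `0 * log 0 = 0`,
which holds automatically since `Real.log 0 = 0`). -/
noncomputable def entropicBound {n : ℕ} (W : Matrix (Fin n) (Fin n) ℝ) : ℝ :=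
  -(1 / (n : ℝ)) * ∑ i : Fin n, ∑ j ∈ Finset.univ.erase i,
    (W i j / ∑ k ∈ Finset.univ.erase i, W i k) *
      Real.log (W i j / ∑ k ∈ Finset.univ.erase i, W i k)


/-- Cosine similarity of two vectors of `ℝ^q`. -/
noncomputable def cosSim {q : ℕ} (u v : EuclideanSpace ℝ (Fin q)) : ℝ :=
  (inner ℝ u v : ℝ) / (‖u‖ * ‖v‖)

/-- Latent similarity matrix `s_{ij} = cos(z_i, z_j)/τ`. -/
noncomputable def SCos {n q : ℕ} (τ : ℝ) (z : Fin n → EuclideanSpace ℝ (Fin q)) :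
    Matrix (Fin n) (Fin n) ℝ :=
  Matrix.of fun i j => cosSim (z i) (z j) / τ

/-- X-CLR weights `w_{ij} = exp(cos(y_i, y_j)/τ')`. -/
noncomputable def Wxclr {n l : ℕ} (τ' : ℝ) (y : Fin n → EuclideanSpace ℝ (Fin l)) :
    Matrix (Fin n) (Fin n) ℝ :=
  Matrix.of fun i j => Real.exp (cosSim (y i) (y j) / τ')

/-- The X-CLR optimal embedding `z*_i = (y_i/‖y_i‖, √(τ'/τ - 1), 0, …, 0) ∈ ℝ^q`. -/
noncomputable def xclrEmbed (l q : ℕ) (τ τ' : ℝ) (yi : EuclideanSpace ℝ (Fin l)) :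
    EuclideanSpace ℝ (Fin q) :=
  (WithLp.equiv 2 (Fin q → ℝ)).symm fun j =>
    if h : (j : ℕ) < l then (WithLp.equiv 2 (Fin l → ℝ)) yi ⟨(j : ℕ), h⟩ / ‖yi‖
    else if (j : ℕ) = l then Real.sqrt (τ' / τ - 1) else 0

lemma gram_to_isometry {n q : ℕ} (z z' : Fin n → EuclideanSpace ℝ (Fin q))
    (h : ∀ i j, ⟪z i, z j⟫ = ⟪z' i, z' j⟫) :
    ∃ O : EuclideanSpace ℝ (Fin q) ≃ₗᵢ[ℝ] EuclideanSpace ℝ (Fin q),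
      ∀ i, z' i = O (z i) := by
  classical
  let Φ : (Fin n → ℝ) →ₗ[ℝ] EuclideanSpace ℝ (Fin q) := Fintype.linearCombination ℝ z
  let Φ' : (Fin n → ℝ) →ₗ[ℝ] EuclideanSpace ℝ (Fin q) := Fintype.linearCombination ℝ z'
  have key : ∀ x y : Fin n → ℝ, ⟪Φ x, Φ y⟫ = ⟪Φ' x, Φ' y⟫ := by
    intro x y
    simp only [Φ, Φ', Fintype.linearCombination_apply]
    rw [sum_inner, sum_inner]
    refine Finset.sum_congr rfl fun i _ => ?_
    rw [inner_sum, inner_sum]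
    refine Finset.sum_congr rfl fun j _ => ?_
    rw [real_inner_smul_left, real_inner_smul_left, real_inner_smul_right,
      real_inner_smul_right, h]
  have hker : ∀ x, Φ x = 0 → Φ' x = 0 := by
    intro x hx
    have : ⟪Φ' x, Φ' x⟫ = 0 := by rw [← key, hx, inner_zero_left]
    exact inner_self_eq_zero.mp this
  set V : Submodule ℝ (EuclideanSpace ℝ (Fin q)) := LinearMap.range Φ with hV
  obtain ⟨g, hg⟩ := Φ.rangeRestrict.exists_rightInverse_of_surjective
    (LinearMap.range_rangeRestrict Φ)
  have hgv : ∀ v : V, Φ (g v) = (v : EuclideanSpace ℝ (Fin q)) := by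
    intro v
    have := congrArg (fun f => f v) hg
    simpa [LinearMap.comp_apply] using congrArg Subtype.val this
  let f : V →ₗ[ℝ] EuclideanSpace ℝ (Fin q) := Φ'.comp g
  have hfin : ∀ u v : V, ⟪f u, f v⟫ = ⟪u, v⟫ := by
    intro u v
    have : ⟪f u, f v⟫ = ⟪Φ (g u), Φ (g v)⟫ := (key (g u) (g v)).symm
    rw [this, hgv, hgv]
    rfl
  let L : V →ₗᵢ[ℝ] EuclideanSpace ℝ (Fin q) := f.isometryOfInner hfin
  let OO := L.extend
  refine ⟨OO.toLinearIsometryEquiv rfl, fun i => ?_⟩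
  have hz_mem : z i ∈ V := by
    refine ⟨Pi.single i 1, ?_⟩
    simp [Φ]
  have h1 : OO.toLinearIsometryEquiv rfl (z i) = OO (z i) := rfl
  rw [h1]
  have h2 : OO (z i) = L ⟨z i, hz_mem⟩ := LinearIsometry.extend_apply L ⟨z i, hz_mem⟩
  rw [h2]
  symm
  show Φ' (g ⟨z i, hz_mem⟩) = z' i
  have h3 : Φ (g ⟨z i, hz_mem⟩ - Pi.single i 1) = 0 := by
    rw [map_sub, hgv]
    simp [Φ]
  have h4 := hker _ h3
  rw [map_sub] at h4
  have : Φ' (g ⟨z i, hz_mem⟩) = Φ' (Pi.single i 1) := by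
    have := sub_eq_zero.mp h4
    exact this
  rw [this]
  simp [Φ']


lemma const_eq_of_two_grams {n q : ℕ} (hn : 2 * q + 4 < n)
    (z z' : Fin n → EuclideanSpace ℝ (Fin q)) (d d' : ℝ)
    (hzz : ∀ i j, i ≠ j → ⟪z i, z j⟫ - ⟪z' i, z' j⟫ = d - d')
    (hdiag : ∀ i, ⟪z i, z i⟫ = ⟪z' i, z' i⟫) : d = d' := by
  classical
  let Φ : (Fin n → ℝ) →ₗ[ℝ] EuclideanSpace ℝ (Fin q) := Fintype.linearCombination ℝ z
  let Φ' : (Fin n → ℝ) →ₗ[ℝ] EuclideanSpace ℝ (Fin q) := Fintype.linearCombination ℝ z'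
  let σ : (Fin n → ℝ) →ₗ[ℝ] ℝ := Fintype.linearCombination ℝ (fun _ => (1:ℝ))
  have hdim : ∀ (f : (Fin n → ℝ) →ₗ[ℝ] EuclideanSpace ℝ (Fin q)),
      n ≤ finrank ℝ (LinearMap.ker f) + q := by
    intro f
    have h1 := LinearMap.finrank_range_add_finrank_ker f
    have h2 : finrank ℝ (LinearMap.range f) ≤ q := by
      have := Submodule.finrank_le (LinearMap.range f)
      simpa [finrank_euclideanSpace_fin] using this
    have h3 : finrank ℝ (Fin n → ℝ) = n := by
      simp [Module.finrank_fintype_fun_eq_card]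
    omega
  have hdimσ : n ≤ finrank ℝ (LinearMap.ker σ) + 1 := by
    have h1 := LinearMap.finrank_range_add_finrank_ker σ
    have h2 : finrank ℝ (LinearMap.range σ) ≤ 1 := by
      have := Submodule.finrank_le (LinearMap.range σ)
      simpa using this
    have h3 : finrank ℝ (Fin n → ℝ) = n := by
      simp [Module.finrank_fintype_fun_eq_card]
    omega
  have hinf : ∀ (s t : Submodule ℝ (Fin n → ℝ)),
      finrank ℝ s + finrank ℝ t ≤ finrank ℝ (s ⊓ t : Submodule ℝ (Fin n → ℝ)) + n := by
    intro s t
    have h1 := Submodule.finrank_sup_add_finrank_inf_eq s t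
    have h2 : finrank ℝ (s ⊔ t : Submodule ℝ (Fin n → ℝ)) ≤ n := by
      have := Submodule.finrank_le (s ⊔ t)
      simpa [Module.finrank_fintype_fun_eq_card] using this
    omega
  set K : Submodule ℝ (Fin n → ℝ) :=
    (LinearMap.ker Φ ⊓ LinearMap.ker Φ') ⊓ LinearMap.ker σ with hK
  have hKpos : 0 < finrank ℝ K := by
    rw [hK]
    have i1 := hinf (LinearMap.ker Φ) (LinearMap.ker Φ')
    have i2 := hinf (LinearMap.ker Φ ⊓ LinearMap.ker Φ') (LinearMap.ker σ)
    have d1 := hdim Φ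
    have d2 := hdim Φ'
    have d3 := hdimσ
    omega
  have hKne : K ≠ ⊥ := by
    intro h
    rw [h] at hKpos
    simp [finrank_bot] at hKpos
  obtain ⟨x, hxK, hx0⟩ := Submodule.exists_mem_ne_zero_of_ne_bot hKne
  have hxΦ : Φ x = 0 := by
    have := hxK.1.1
    simpa using this
  have hxΦ' : Φ' x = 0 := by
    have := hxK.1.2
    simpa using this
  have hxσ : ∑ i, x i = 0 := by
    have := hxK.2
    have h := LinearMap.mem_ker.mp this
    simpa [σ, Fintype.linearCombination_apply] using h
  have hexp : ∀ (w : Fin n → EuclideanSpace ℝ (Fin q)),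
      ⟪Fintype.linearCombination ℝ w x, Fintype.linearCombination ℝ w x⟫
        = ∑ i, ∑ j, x i * (x j * ⟪w i, w j⟫) := by
    intro w
    rw [Fintype.linearCombination_apply, sum_inner]
    refine Finset.sum_congr rfl fun i _ => ?_
    rw [real_inner_smul_left, inner_sum, Finset.mul_sum]
    refine Finset.sum_congr rfl fun j _ => ?_
    rw [real_inner_smul_right]
  have hzero : ∑ i, ∑ j, x i * (x j * (⟪z i, z j⟫ - ⟪z' i, z' j⟫)) = 0 := by
    have h1 : ∑ i, ∑ j, x i * (x j * (⟪z i, z j⟫ - ⟪z' i, z' j⟫))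
        = (∑ i, ∑ j, x i * (x j * ⟪z i, z j⟫))
          - ∑ i, ∑ j, x i * (x j * ⟪z' i, z' j⟫) := by
      rw [← Finset.sum_sub_distrib]
      refine Finset.sum_congr rfl fun i _ => ?_
      rw [← Finset.sum_sub_distrib]
      refine Finset.sum_congr rfl fun j _ => ?_
      ring
    rw [h1, ← hexp z, ← hexp z']
    show ⟪Φ x, Φ x⟫ - ⟪Φ' x, Φ' x⟫ = 0
    rw [hxΦ, hxΦ', inner_zero_left, sub_zero]
  have hsplit : ∑ i, ∑ j, x i * (x j * (⟪z i, z j⟫ - ⟪z' i, z' j⟫))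
      = (d - d') * ((∑ i, x i) * (∑ j, x j) - ∑ i, x i * x i) := by
    have hterm : ∀ i j : Fin n, x i * (x j * (⟪z i, z j⟫ - ⟪z' i, z' j⟫))
        = x i * x j * (d - d') - (if i = j then x i * x j * (d - d') else 0) := by
      intro i j
      by_cases h : i = j
      · subst h
        rw [if_pos rfl]
        have := hdiag i
        rw [sub_eq_zero.mpr this]
        ring
      · rw [if_neg h, hzz i j h]
        ring
    rw [Finset.sum_congr rfl fun i _ => Finset.sum_congr rfl fun j _ => hterm i j]
    have h1 : ∀ i : Fin n, ∑ j, (x i * x j * (d - d')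
        - (if i = j then x i * x j * (d - d') else 0))
        = (∑ j, x i * x j * (d - d')) - x i * x i * (d - d') := by
      intro i
      rw [Finset.sum_sub_distrib]
      congr 1
      rw [Finset.sum_ite_eq Finset.univ i (fun j => x i * x j * (d - d'))]
      simp
    rw [Finset.sum_congr rfl fun i _ => h1 i, Finset.sum_sub_distrib]
    have hA : ∀ i : Fin n, ∑ j, x i * x j * (d - d')
        = x i * ((∑ j, x j) * (d - d')) := by
      intro i
      simp_rw [mul_assoc, ← Finset.mul_sum]
      rw [Finset.sum_mul]
    rw [Finset.sum_congr rfl fun i _ => hA i, ← Finset.sum_mul, ← Finset.sum_mul]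
    ring
  rw [hsplit, hxσ] at hzero
  have hxsq : 0 < ∑ i, x i * x i := by
    have hne : ∃ i, x i ≠ 0 := by
      by_contra h
      push_neg at h
      exact hx0 (funext h)
    obtain ⟨i, hi⟩ := hne
    exact Finset.sum_pos' (fun j _ => mul_self_nonneg _)
      ⟨i, Finset.mem_univ i, mul_self_pos.mpr hi⟩
  have h2 : d - d' = 0 := by
    rcases mul_eq_zero.mp hzero with h | h
    · exact h
    · exfalso
      rw [zero_mul, zero_sub, neg_eq_zero] at h
      exact hxsq.ne' h
  linarith

lemma infoNCE_eq_of_ratio {n : ℕ} (W S : Matrix (Fin n) (Fin n) ℝ)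
    (h : ∀ i : Fin n, ∀ j ∈ Finset.univ.erase i,
      Real.exp (S i j) / ∑ k ∈ Finset.univ.erase i, Real.exp (S i k)
        = W i j / ∑ k ∈ Finset.univ.erase i, W i k) :
    infoNCE W S = entropicBound W := by
  unfold infoNCE entropicBound
  congr 1
  refine Finset.sum_congr rfl fun i _ => Finset.sum_congr rfl fun j hj => ?_
  rw [h i j hj]

lemma ratio_of_infoNCE_eq {n : ℕ} (hn : 2 ≤ n) (W S : Matrix (Fin n) (Fin n) ℝ)
    (hW : ∀ i j, 0 < W i j) (hEq : infoNCE W S = entropicBound W) :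
    ∀ i : Fin n, ∀ j ∈ Finset.univ.erase i,
      Real.exp (S i j) / ∑ k ∈ Finset.univ.erase i, Real.exp (S i k)
        = W i j / ∑ k ∈ Finset.univ.erase i, W i k := by
  classical
  have hne : ∀ i : Fin n, (Finset.univ.erase i).Nonempty := by
    intro i
    have : 1 < Fintype.card (Fin n) := by rw [Fintype.card_fin]; omega
    obtain ⟨j, hj⟩ := Fintype.exists_ne_of_one_lt_card this i
    exact ⟨j, Finset.mem_erase.mpr ⟨hj, Finset.mem_univ j⟩⟩
  set A : Fin n → ℝ := fun i => ∑ k ∈ Finset.univ.erase i, W i k with hA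
  set B : Fin n → ℝ := fun i => ∑ k ∈ Finset.univ.erase i, Real.exp (S i k) with hB
  have hApos : ∀ i, 0 < A i := fun i =>
    Finset.sum_pos (fun k _ => hW i k) (hne i)
  have hBpos : ∀ i, 0 < B i := fun i =>
    Finset.sum_pos (fun k _ => Real.exp_pos _) (hne i)
  set p : Fin n → Fin n → ℝ := fun i j => W i j / A i with hp
  set q : Fin n → Fin n → ℝ := fun i j => Real.exp (S i j) / B i with hq
  have hppos : ∀ i j, 0 < p i j := fun i j => div_pos (hW i j) (hApos i)
  have hqpos : ∀ i j, 0 < q i j := fun i j => div_pos (Real.exp_pos _) (hBpos i)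
  have hpsum : ∀ i, ∑ j ∈ Finset.univ.erase i, p i j = 1 := by
    intro i; rw [hp]; simp only [← Finset.sum_div]; exact div_self (hApos i).ne'
  have hqsum : ∀ i, ∑ j ∈ Finset.univ.erase i, q i j = 1 := by
    intro i; rw [hq]; simp only [← Finset.sum_div]; exact div_self (hBpos i).ne'
  set T : Fin n → Fin n → ℝ :=
    fun i j => (q i j - p i j) - p i j * Real.log (q i j / p i j) with hT
  have hTnonneg : ∀ i j, 0 ≤ T i j := by
    intro i j
    have hx : 0 < q i j / p i j := div_pos (hqpos i j) (hppos i j)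
    have hlog := Real.log_le_sub_one_of_pos hx
    have h1 : p i j * Real.log (q i j / p i j) ≤ p i j * (q i j / p i j - 1) :=
      mul_le_mul_of_nonneg_left hlog (hppos i j).le
    have h2 : p i j * (q i j / p i j - 1) = q i j - p i j := by
      rw [mul_comm, sub_mul, div_mul_cancel₀ _ (hppos i j).ne', one_mul]
    rw [hT]; dsimp only; linarith [h1.trans_eq h2]
  have hlogdiv : ∀ i j, Real.log (q i j / p i j) = Real.log (q i j) - Real.log (p i j) :=
    fun i j => Real.log_div (hqpos i j).ne' (hppos i j).ne'
  have hTsum : ∑ i : Fin n, ∑ j ∈ Finset.univ.erase i, T i j = 0 := by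
    have hnn : (0:ℝ) < n := by positivity
    have hcross : ∑ i : Fin n, ∑ j ∈ Finset.univ.erase i, p i j * Real.log (q i j)
        = ∑ i : Fin n, ∑ j ∈ Finset.univ.erase i, p i j * Real.log (p i j) := by
      have := hEq
      unfold infoNCE entropicBound at this
      have h2 := mul_left_cancel₀ (a := -(1 / (n:ℝ))) (by
        simp only [ne_eq, neg_eq_zero, one_div, inv_eq_zero]
        exact_mod_cast hnn.ne') this
      exact h2
    have expand : ∀ i : Fin n, ∑ j ∈ Finset.univ.erase i, T i j
        = - (∑ j ∈ Finset.univ.erase i, p i j * Real.log (q i j)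
            - ∑ j ∈ Finset.univ.erase i, p i j * Real.log (p i j)) := by
      intro i
      rw [hT]
      simp only
      rw [Finset.sum_sub_distrib, Finset.sum_sub_distrib, hpsum, hqsum]
      have : ∑ j ∈ Finset.univ.erase i, p i j * Real.log (q i j / p i j)
          = ∑ j ∈ Finset.univ.erase i,
            (p i j * Real.log (q i j) - p i j * Real.log (p i j)) := by
        refine Finset.sum_congr rfl fun j _ => ?_
        rw [hlogdiv]; ring
      rw [this, Finset.sum_sub_distrib]
      ring
    rw [Finset.sum_congr rfl fun i _ => expand i]
    simp only [neg_sub]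
    rw [Finset.sum_sub_distrib, sub_eq_zero]
    exact hcross.symm
  have hTzero : ∀ i : Fin n, ∀ j ∈ Finset.univ.erase i, T i j = 0 := by
    have houter : ∀ i ∈ Finset.univ, 0 ≤ ∑ j ∈ Finset.univ.erase i, T i j :=
      fun i _ => Finset.sum_nonneg fun j _ => hTnonneg i j
    have h1 := (Finset.sum_eq_zero_iff_of_nonneg houter).mp hTsum
    intro i j hj
    have h2 := h1 i (Finset.mem_univ i)
    have h3 := (Finset.sum_eq_zero_iff_of_nonneg fun j _ => hTnonneg i j).mp h2
    exact h3 j hj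
  intro i j hj
  have hT0 := hTzero i j hj
  rw [hT] at hT0
  set x := q i j / p i j with hx
  have hxpos : 0 < x := div_pos (hqpos i j) (hppos i j)
  have hfact : q i j - p i j = p i j * (x - 1) := by
    rw [hx, mul_comm, sub_mul, div_mul_cancel₀ _ (hppos i j).ne', one_mul]
  have hlogx : Real.log x = x - 1 := by
    have h3 : p i j * (x - 1) = p i j * Real.log x := by linarith [hT0, hfact]
    have h5 := mul_left_cancel₀ (hppos i j).ne' h3
    linarith
  have hx1 : x = 1 := by
    by_contra hne'
    exact absurd hlogx (Real.log_lt_sub_one_of_pos hxpos hne').ne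
  exact (div_eq_one_iff_eq (hppos i j).ne').mp hx1

lemma embed_inner {l q : ℕ} (hlq : l < q) {τ τ' : ℝ} (hτ : 0 < τ) (hττ' : τ ≤ τ')
    (u v : EuclideanSpace ℝ (Fin l)) :
    ⟪xclrEmbed l q τ τ' u, xclrEmbed l q τ τ' v⟫ = cosSim u v + (τ' / τ - 1) := by
  have hr : (0:ℝ) ≤ τ' / τ - 1 := by
    have := (div_le_div_iff_of_pos_right hτ).mpr hττ'
    have h1 : (1:ℝ) ≤ τ' / τ := by
      rw [le_div_iff₀ hτ]; linarith
    linarith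
  classical
  set g : ℕ → ℝ := fun m =>
    if h : m < l then u ⟨m, h⟩ * v ⟨m, h⟩ / (‖u‖ * ‖v‖)
    else if m = l then (τ' / τ - 1) else 0 with hg
  have hcomp : ∀ j : Fin q,
      (xclrEmbed l q τ τ' u) j * (xclrEmbed l q τ τ' v) j = g (j : ℕ) := by
    intro j
    by_cases h : (j : ℕ) < l
    · simp only [xclrEmbed, WithLp.equiv_symm_apply, WithLp.ofLp_toLp, hg, h, dif_pos]
      rw [div_mul_div_comm]
      rfl
    · by_cases h2 : (j : ℕ) = l
      · simp only [xclrEmbed, WithLp.equiv_symm_apply, WithLp.ofLp_toLp, hg, h, dif_neg, if_pos h2,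
          not_false_iff]
        exact Real.mul_self_sqrt hr
      · simp only [xclrEmbed, WithLp.equiv_symm_apply, WithLp.ofLp_toLp, hg, h, dif_neg, if_neg h2,
          not_false_iff, mul_zero]
  rw [PiLp.inner_apply]
  simp only [RCLike.inner_apply, conj_trivial, mul_comm ((xclrEmbed l q τ τ' v).ofLp _)]
  calc ∑ j : Fin q, (xclrEmbed l q τ τ' u) j * (xclrEmbed l q τ τ' v) j
      = ∑ j : Fin q, g (j : ℕ) := Finset.sum_congr rfl fun j _ => hcomp j
    _ = ∑ m ∈ Finset.range q, g m := Fin.sum_univ_eq_sum_range g q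
    _ = (∑ m ∈ Finset.range (l+1), g m) + ∑ m ∈ Finset.Ico (l+1) q, g m := by
        rw [Finset.sum_range_add_sum_Ico g hlq]
    _ = (∑ m ∈ Finset.range l, g m) + g l := by
        rw [Finset.sum_range_succ]
        have : ∑ m ∈ Finset.Ico (l+1) q, g m = 0 := by
          refine Finset.sum_eq_zero fun m hm => ?_
          have hm' := (Finset.mem_Ico.mp hm).1
          have h1 : ¬ m < l := by omega
          have h2 : ¬ m = l := by omega
          simp [hg, h1, h2]
        rw [this, add_zero]
    _ = cosSim u v + (τ' / τ - 1) := by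
        have hL : ∑ m ∈ Finset.range l, g m = cosSim u v := by
          rw [← Fin.sum_univ_eq_sum_range g l]
          have : ∀ j : Fin l, g (j : ℕ) = u j * v j / (‖u‖ * ‖v‖) := by
            intro j
            simp [hg, j.isLt]
          rw [Finset.sum_congr rfl fun j _ => this j, ← Finset.sum_div]
          rw [cosSim, PiLp.inner_apply]
          simp [RCLike.inner_apply, mul_comm]
        have hgl : g l = τ' / τ - 1 := by simp [hg]
        rw [hL, hgl]

lemma cosSim_self {q : ℕ} (u : EuclideanSpace ℝ (Fin q)) (hu : u ≠ 0) :
    cosSim u u = 1 := by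
  rw [cosSim, ← real_inner_self_eq_norm_mul_norm]
  exact div_self ((inner_self_ne_zero (𝕜 := ℝ)).mpr hu)

lemma cosSim_comm {q : ℕ} (u v : EuclideanSpace ℝ (Fin q)) :
    cosSim u v = cosSim v u := by
  rw [cosSim, cosSim, real_inner_comm, mul_comm]

lemma cosSim_normalize {q : ℕ} (u v : EuclideanSpace ℝ (Fin q)) :
    ⟪‖u‖⁻¹ • u, ‖v‖⁻¹ • v⟫ = cosSim u v := by
  rw [real_inner_smul_left, real_inner_smul_right, cosSim, div_eq_mul_inv, mul_inv]
  ring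

lemma embed_norm {l q : ℕ} (hlq : l < q) {τ τ' : ℝ} (hτ : 0 < τ) (hττ' : τ ≤ τ')
    (u : EuclideanSpace ℝ (Fin l)) (hu : u ≠ 0) :
    ‖xclrEmbed l q τ τ' u‖ = Real.sqrt (τ' / τ) := by
  have h1 : ⟪xclrEmbed l q τ τ' u, xclrEmbed l q τ τ' u⟫ = τ' / τ := by
    rw [embed_inner hlq hτ hττ' u u, cosSim_self u hu]
    ring
  rw [norm_eq_sqrt_real_inner, h1]

lemma embed_cosSim {l q : ℕ} (hlq : l < q) {τ τ' : ℝ} (hτ : 0 < τ) (hττ' : τ ≤ τ')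
    (u v : EuclideanSpace ℝ (Fin l)) (hu : u ≠ 0) (hv : v ≠ 0) :
    cosSim (xclrEmbed l q τ τ' u) (xclrEmbed l q τ τ' v) / τ
      = cosSim u v / τ' + (1 / τ - 1 / τ') := by
  have hτ' : 0 < τ' := lt_of_lt_of_le hτ hττ'
  have hr : 0 < τ' / τ := div_pos hτ' hτ
  rw [cosSim, embed_inner hlq hτ hττ' u v, embed_norm hlq hτ hττ' u hu,
    embed_norm hlq hτ hττ' v hv, Real.mul_self_sqrt hr.le]
  field_simp

/-- X-CLR: the explicit embedding `Z*` attains the entropic lower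
bound, and any two attaining nonzero embeddings have normalizations differing by a
linear isometry. -/
theorem statement8 {n q l : ℕ} (hq : 2 ≤ q) (hn : 2 * q + 4 < n)
    (hl : 1 ≤ l) (hlq : l < q) (τ τ' : ℝ) (hτ : 0 < τ) (hττ' : τ ≤ τ')
    (y : Fin n → EuclideanSpace ℝ (Fin l)) (hy : ∀ i, y i ≠ 0) :
    infoNCE (Wxclr τ' y) (SCos τ fun i => xclrEmbed l q τ τ' (y i))
        = entropicBound (Wxclr τ' y) ∧
    (∀ z z' : Fin n → EuclideanSpace ℝ (Fin q), (∀ i, z i ≠ 0) → (∀ i, z' i ≠ 0) →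
      infoNCE (Wxclr τ' y) (SCos τ z) = entropicBound (Wxclr τ' y) →
      infoNCE (Wxclr τ' y) (SCos τ z') = entropicBound (Wxclr τ' y) →
      ∃ O : EuclideanSpace ℝ (Fin q) ≃ₗᵢ[ℝ] EuclideanSpace ℝ (Fin q),
        ∀ i : Fin n, ‖z' i‖⁻¹ • z' i = O (‖z i‖⁻¹ • z i)) := by
  have hτ' : 0 < τ' := lt_of_lt_of_le hτ hττ'
  have hn2 : 2 ≤ n := by omega
  have hnpos : 0 < n := by omega
  have hWpos : ∀ i j : Fin n, 0 < Wxclr τ' y i j := fun i j => Real.exp_pos _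
  constructor
  · -- Part 1
    refine infoNCE_eq_of_ratio _ _ fun i j hj => ?_
    have hS : ∀ i j : Fin n,
        Real.exp ((SCos τ fun i => xclrEmbed l q τ τ' (y i)) i j)
          = Wxclr τ' y i j * Real.exp (1 / τ - 1 / τ') := by
      intro i j
      have h1 : (SCos τ fun i => xclrEmbed l q τ τ' (y i)) i j
          = cosSim (y i) (y j) / τ' + (1 / τ - 1 / τ') := by
        show cosSim (xclrEmbed l q τ τ' (y i)) (xclrEmbed l q τ τ' (y j)) / τ
          = cosSim (y i) (y j) / τ' + (1 / τ - 1 / τ')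
        exact embed_cosSim hlq hτ hττ' (y i) (y j) (hy i) (hy j)
      rw [h1, Real.exp_add]
      rfl
    rw [Finset.sum_congr rfl fun k _ => hS i k, hS i j, ← Finset.sum_mul,
      mul_div_mul_right _ _ (Real.exp_ne_zero _)]
  · -- Part 2
    intro z z' hz hz' hEz hEz'
    -- extract the Gram structure for an attaining embedding
    have main : ∀ w : Fin n → EuclideanSpace ℝ (Fin q), (∀ i, w i ≠ 0) →
        infoNCE (Wxclr τ' y) (SCos τ w) = entropicBound (Wxclr τ' y) →
        ∃ d : ℝ, ∀ i j : Fin n, i ≠ j →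
          ⟪‖w i‖⁻¹ • w i, ‖w j‖⁻¹ • w j⟫ = τ * (cosSim (y i) (y j) / τ') + d := by
      intro w hw hEw
      have hrat := ratio_of_infoNCE_eq hn2 _ _ hWpos hEw
      set A : Fin n → ℝ := fun i => ∑ k ∈ Finset.univ.erase i, Wxclr τ' y i k with hA
      set B : Fin n → ℝ := fun i =>
        ∑ k ∈ Finset.univ.erase i, Real.exp (SCos τ w i k) with hB
      have hne : ∀ i : Fin n, (Finset.univ.erase i).Nonempty := by
        intro i
        have : 1 < Fintype.card (Fin n) := by rw [Fintype.card_fin]; omega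
        obtain ⟨j, hj⟩ := Fintype.exists_ne_of_one_lt_card this i
        exact ⟨j, Finset.mem_erase.mpr ⟨hj, Finset.mem_univ j⟩⟩
      have hApos : ∀ i, 0 < A i := fun i =>
        Finset.sum_pos (fun k _ => hWpos i k) (hne i)
      have hBpos : ∀ i, 0 < B i := fun i =>
        Finset.sum_pos (fun k _ => Real.exp_pos _) (hne i)
      set cc : Fin n → ℝ := fun i => Real.log (B i / A i) with hcc
      have hrow : ∀ i j : Fin n, i ≠ j →
          cosSim (w i) (w j) / τ = cosSim (y i) (y j) / τ' + cc i := by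
        intro i j hij
        have hj : j ∈ Finset.univ.erase i :=
          Finset.mem_erase.mpr ⟨hij.symm, Finset.mem_univ j⟩
        have h1 := hrat i j hj
        have h2 : Real.exp (SCos τ w i j) = Wxclr τ' y i j * (B i / A i) := by
          rw [div_eq_div_iff (hBpos i).ne' (hApos i).ne'] at h1
          field_simp [(hApos i).ne'] at h1 ⊢
          linarith [h1]
        have h3 := congrArg Real.log h2
        rw [Real.log_exp, Real.log_mul (hWpos i j).ne'
          (div_pos (hBpos i) (hApos i)).ne'] at h3
        have h4 : Real.log (Wxclr τ' y i j) = cosSim (y i) (y j) / τ' := by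
          show Real.log (Real.exp _) = _
          rw [Real.log_exp]
        rw [h4] at h3
        exact h3
      have hccconst : ∀ i j : Fin n, i ≠ j → cc i = cc j := by
        intro i j hij
        have h1 := hrow i j hij
        have h2 := hrow j i hij.symm
        rw [cosSim_comm (w j) (w i), cosSim_comm (y j) (y i)] at h2
        linarith [h1, h2]
      refine ⟨τ * cc ⟨0, hnpos⟩, fun i j hij => ?_⟩
      have hcs : cosSim (w i) (w j) = τ * (cosSim (y i) (y j) / τ') + τ * cc i := by
        have := hrow i j hij
        field_simp at this ⊢
        linarith [this]
      have hcc0 : cc i = cc ⟨0, hnpos⟩ := by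
        by_cases h : i = (⟨0, hnpos⟩ : Fin n)
        · rw [h]
        · exact hccconst i ⟨0, hnpos⟩ h
      rw [cosSim_normalize, hcs, hcc0]
    obtain ⟨d, hd⟩ := main z hz hEz
    obtain ⟨d', hd'⟩ := main z' hz' hEz'
    have hdiag : ∀ (w : Fin n → EuclideanSpace ℝ (Fin q)), (∀ i, w i ≠ 0) →
        ∀ i, ⟪‖w i‖⁻¹ • w i, ‖w i‖⁻¹ • w i⟫ = 1 := by
      intro w hw i
      rw [cosSim_normalize]
      exact cosSim_self (w i) (hw i)
    have hdd' : d = d' := by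
      refine const_eq_of_two_grams hn (fun i => ‖z i‖⁻¹ • z i)
        (fun i => ‖z' i‖⁻¹ • z' i) d d' (fun i j hij => ?_) (fun i => ?_)
      · rw [hd i j hij, hd' i j hij]; ring
      · rw [hdiag z hz i, hdiag z' hz' i]
    have hgram : ∀ i j : Fin n,
        ⟪‖z i‖⁻¹ • z i, ‖z j‖⁻¹ • z j⟫ = ⟪‖z' i‖⁻¹ • z' i, ‖z' j‖⁻¹ • z' j⟫ := by
      intro i j
      by_cases h : i = j
      · subst h
        rw [hdiag z hz i, hdiag z' hz' i]
      · rw [hd i j h, hd' i j h, hdd']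
    obtain ⟨O, hO⟩ := gram_to_isometry (fun i => ‖z i‖⁻¹ • z i)
      (fun i => ‖z' i‖⁻¹ • z' i) hgram
    exact ⟨O, hO⟩
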